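/- arXiv:1306.3410 — 8 statements merged into one kernel-verified Lean document; each statement's English description precedes it below -/
import Mathlib

section
/- Let B be a unital C*-algebra and X a Hilbert C*-module over B. For every x ∈ X, the inner product ⟨x,x⟩ is invertible in B if and only if there exists y ∈ X such that ⟨y,x⟩ = 1. -/
open scoped ComplexOrder RightActions in
/-- The Hilbert C⋆-module class as Mathlib defined it in December 2024 (right `A`-action via
`Aᵐᵒᵖ`, with `⟪x, y <• a⟫ = ⟪x, y⟫ * a`); Mathlib's `CStarModule` now uses a left action. -/
class CStarModuleRight (A E : Type*) [NonUnitalSemiring A] [StarRing A]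
    [Module ℂ A] [AddCommGroup E] [Module ℂ E] [PartialOrder A] [SMul Aᵐᵒᵖ E] [Norm A] [Norm E]
    extends Inner A E where
  inner_add_right {x} {y} {z} : inner x (y + z) = inner x y + inner x z
  inner_self_nonneg {x} : 0 ≤ inner x x
  inner_self {x} : inner x x = 0 ↔ x = 0
  inner_op_smul_right {a : A} {x y : E} : inner x (y <• a) = inner x y * a
  inner_smul_right_complex {z : ℂ} {x} {y} : inner x (z • y) = z • inner x y
  star_inner x y : star (inner x y) = inner y x
  norm_eq_sqrt_norm_inner_self x : ‖x‖ = √‖inner x x‖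

/-!
If `⟪x, x⟫` is invertible, `y = x <• ⟪x, x⟫⁻¹` works. Conversely, the C⋆-valued Cauchy–Schwarz
inequality `⟪x, y⟫ * ⟪y, x⟫ ≤ ‖y‖ ^ 2 • ⟪x, x⟫` turns `⟪y, x⟫ = 1` into `1 ≤ ‖y‖ ^ 2 • ⟪x, x⟫`,
and in a unital C⋆-algebra anything above `1` is invertible.
-/

lemma CStarAlgebra.isUnit_of_one_le_smul {A : Type*} [CStarAlgebra A] [PartialOrder A]
    [StarOrderedRing A] {r : ℝ} {a : A} (h : 1 ≤ r • a) : IsUnit a := by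
  nontriviality A
  have hr : r ≠ 0 := by
    rintro rfl
    exact (zero_lt_one' A).not_ge (by simpa using h)
  exact (isUnit_smul_iff (Units.mk0 r hr) a).mp (CStarAlgebra.isUnit_of_le 1 h)

namespace CStarModuleRight

open scoped RightActions

variable {B X : Type*} [CStarAlgebra B] [PartialOrder B]
  [AddCommGroup X] [Norm X] [Module ℂ X] [SMul Bᵐᵒᵖ X] [CStarModuleRight B X]

local notation "⟪" x ", " y "⟫" => inner B x y

lemma inner_sub_right {x y z : X} : ⟪x, y - z⟫ = ⟪x, y⟫ - ⟪x, z⟫ :=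
  map_sub (AddMonoidHom.mk' (inner B x) fun _ _ => inner_add_right) y z

lemma inner_zero_right {x : X} : ⟪x, 0⟫ = 0 :=
  map_zero (AddMonoidHom.mk' (inner B x) fun _ _ => inner_add_right)

lemma inner_sub_left {x y z : X} : ⟪x - y, z⟫ = ⟪x, z⟫ - ⟪y, z⟫ := by
  rw [← star_inner z, inner_sub_right, star_sub, star_inner, star_inner]

lemma inner_zero_left {x : X} : ⟪0, x⟫ = 0 := by
  rw [← star_inner x, inner_zero_right, star_zero]

lemma inner_op_smul_left {a : B} {x y : X} : ⟪x <• a, y⟫ = star a * ⟪x, y⟫ := by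
  rw [← star_inner y, inner_op_smul_right, star_mul, star_inner]

lemma inner_smul_right_real {r : ℝ} {x y : X} : ⟪x, r • y⟫ = r • ⟪x, y⟫ := by
  rw [← Complex.coe_smul, inner_smul_right_complex, Complex.coe_smul]

lemma inner_smul_left_real {r : ℝ} {x y : X} : ⟪r • x, y⟫ = r • ⟪x, y⟫ := by
  rw [← star_inner y, inner_smul_right_real, star_smul, star_trivial, star_inner]

lemma norm_sq_eq (x : X) : ‖x‖ ^ 2 = ‖⟪x, x⟫‖ := by
  rw [norm_eq_sqrt_norm_inner_self (A := B), Real.sq_sqrt (norm_nonneg _)]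

lemma isSelfAdjoint_inner_self (x : X) : IsSelfAdjoint ⟪x, x⟫ :=
  star_inner x x

variable [StarOrderedRing B]

lemma inner_mul_inner_swap_le (x y : X) : ⟪y, x⟫ * ⟪x, y⟫ ≤ ‖x‖ ^ 2 • ⟪y, y⟫ := by
  rcases eq_or_ne x 0 with rfl | hx
  · rw [inner_zero_left, mul_zero, norm_sq_eq (B := B), inner_zero_left, norm_zero, zero_smul]
  have key : ∀ a : B, (0 : B) ≤ ‖x‖ ^ 2 • (star a * a) - ‖x‖ ^ 2 • (star a * ⟪x, y⟫)
      - ‖x‖ ^ 2 • (⟪y, x⟫ * a) + ‖x‖ ^ 2 • (‖x‖ ^ 2 • ⟪y, y⟫) := fun a => by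
    calc (0 : B) ≤ ⟪x <• a - ‖x‖ ^ 2 • y, x <• a - ‖x‖ ^ 2 • y⟫ := inner_self_nonneg
      _ = star a * ⟪x, x⟫ * a - ‖x‖ ^ 2 • (star a * ⟪x, y⟫)
            - ‖x‖ ^ 2 • (⟪y, x⟫ * a) + ‖x‖ ^ 2 • (‖x‖ ^ 2 • ⟪y, y⟫) := by
        simp only [inner_sub_right, inner_sub_left, inner_op_smul_right, inner_op_smul_left,
          inner_smul_right_real, inner_smul_left_real, smul_sub, sub_mul, smul_mul_assoc,
          mul_assoc]
        abel
      _ ≤ _ := by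
        gcongr
        rw [norm_sq_eq (B := B)]
        exact CStarAlgebra.star_left_conjugate_le_norm_smul (hb := isSelfAdjoint_inner_self x)
  specialize key ⟪x, y⟫
  rw [star_inner x y] at key
  simp only [sub_self, zero_sub, le_neg_add_iff_add_le, add_zero] at key
  have hx_pos : 0 < ‖x‖ ^ 2 := by
    rwa [norm_sq_eq (B := B), norm_pos_iff, Ne, inner_self]
  rwa [smul_le_smul_iff_of_pos_left hx_pos] at key

end CStarModuleRight

theorem inner_self_isUnit_iff_exists_inner_eq_one_general
    {B X : Type*} [CStarAlgebra B] [PartialOrder B] [StarOrderedRing B]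
    [NormedAddCommGroup X] [Module ℂ X] [SMul Bᵐᵒᵖ X] [CStarModuleRight B X]
    (x : X) :
    IsUnit (inner B x x : B) ↔ ∃ y : X, (inner B y x : B) = 1 := by
  open scoped RightActions in
  constructor
  · rintro ⟨u, hu⟩
    refine ⟨x <• star (↑u⁻¹ : B), ?_⟩
    rw [CStarModuleRight.inner_op_smul_left, star_star, ← hu, u.inv_mul]
  · rintro ⟨y, hy⟩
    have hxy : inner B x y = (1 : B) := by rw [← CStarModuleRight.star_inner, hy, star_one]
    have hcs : inner B x y * inner B y x ≤ ‖y‖ ^ 2 • inner B x x :=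
      CStarModuleRight.inner_mul_inner_swap_le y x
    rw [hxy, hy, one_mul] at hcs
    exact CStarAlgebra.isUnit_of_one_le_smul hcs

/-- Let `B` be a unital C⋆-algebra and `X` a Hilbert C⋆-module over `B`.
For every `x ∈ X`, the inner product `⟪x, x⟫` is invertible in `B` if and only if there
exists `y ∈ X` such that `⟪y, x⟫ = 1`. -/
theorem inner_self_isUnit_iff_exists_inner_eq_one
    {B X : Type*} [CStarAlgebra B] [PartialOrder B] [StarOrderedRing B]
    [NormedAddCommGroup X] [Module ℂ X] [SMul Bᵐᵒᵖ X] [CStarModuleRight B X] [CompleteSpace X]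
    (x : X) :
    IsUnit (inner B x x : B) ↔ ∃ y : X, (inner B y x : B) = 1 :=
  inner_self_isUnit_iff_exists_inner_eq_one_general x
end

section
/- Let B be a unital C*-algebra and X a Hilbert C*-module over B. For every x ∈ X, the inner product ⟨x,x⟩ is invertible in B if and only if there exists y ∈ X such that ⟨x,y⟩ = 1. -/
/-!
If `⟪x, x⟫` is invertible, `y = ⟪x, x⟫⁻¹ • x` satisfies `⟪x, y⟫ = 1`. Conversely, if
`⟪x, y⟫ = 1` then also `⟪y, x⟫ = 1`, and the Cauchy–Schwarz inequality
`⟪y, x⟫ * ⟪x, y⟫ ≤ ‖y‖ ^ 2 • ⟪x, x⟫` gives `1 ≤ ‖y‖ ^ 2 • ⟪x, x⟫`; an element dominating `1`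
in a unital C⋆-algebra is invertible.
-/

theorem isUnit_of_isUnit_smul {R A : Type*} [CommSemiring R] [Semiring A] [Algebra R A]
    {r : R} {a : A} (h : IsUnit (r • a)) : IsUnit a := by
  rw [Algebra.smul_def] at h
  exact ((Algebra.commute_algebraMap_left r a).isUnit_mul_iff.mp h).2

namespace CStarModule

theorem exists_inner_right_eq_one_of_isUnit {A E : Type*} [Ring A] [StarRing A] [AddCommGroup E]
    [Module ℂ A] [Module ℂ E] [PartialOrder A] [SMul A E] [Norm A] [Norm E] [CStarModule A E]
    {x : E} (hx : IsUnit (inner A x x)) : ∃ y : E, inner A x y = 1 := by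
  obtain ⟨u, hu⟩ := hx
  refine ⟨(↑u⁻¹ : A) • x, ?_⟩
  rw [inner_op_smul_right, ← hu, Units.inv_mul]

theorem isUnit_inner_self_of_inner_eq_one {A E : Type*} [CStarAlgebra A] [PartialOrder A]
    [StarOrderedRing A] [NormedAddCommGroup E] [Module ℂ E] [SMul A E] [CStarModule A E]
    {x y : E} (hxy : inner A x y = 1) : IsUnit (inner A x x) := by
  have hyx : inner A y x = 1 := by rw [← star_inner, hxy, star_one]
  have hle : (1 : A) ≤ ‖y‖ ^ 2 • inner A x x := by
    simpa only [hyx, hxy, one_mul] using inner_mul_inner_swap_le (A := A) (x := y) (y := x)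
  exact isUnit_of_isUnit_smul (CStarAlgebra.isUnit_of_le 1 hle)

end CStarModule

theorem inner_self_isUnit_iff_exists_inner_right_eq_one_general
    {B X : Type*} [CStarAlgebra B] [PartialOrder B] [StarOrderedRing B]
    [NormedAddCommGroup X] [Module ℂ X] [SMul B X] [CStarModule B X]
    (x : X) :
    IsUnit (inner B x x : B) ↔ ∃ y : X, (inner B x y : B) = 1 :=
  ⟨CStarModule.exists_inner_right_eq_one_of_isUnit,
    fun ⟨_, hxy⟩ ↦ CStarModule.isUnit_inner_self_of_inner_eq_one hxy⟩

/-- Let `B` be a unital C⋆-algebra and `X` a Hilbert C⋆-module over `B`.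
For every `x ∈ X`, the inner product `⟪x, x⟫` is invertible in `B` if and only if there
exists `y ∈ X` such that `⟪x, y⟫ = 1`. -/
theorem inner_self_isUnit_iff_exists_inner_right_eq_one
    {B X : Type*} [CStarAlgebra B] [PartialOrder B] [StarOrderedRing B]
    [NormedAddCommGroup X] [Module ℂ X] [SMul B X] [CStarModule B X] [CompleteSpace X]
    (x : X) :
    IsUnit (inner B x x : B) ↔ ∃ y : X, (inner B x y : B) = 1 :=
  inner_self_isUnit_iff_exists_inner_right_eq_one_general x
end

section
/- Let B be a unital C*-algebra and X a Hilbert C*-module over B. For every x ∈ X, the inner product ⟨x,x⟩ is invertible in B if and only if there exists y ∈ X such that ⟨y,x⟩ is invertible in B. -/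
/-!
If `⟪y, x⟫` is invertible, then so is the positive element `⟪y, x⟫ * ⟪x, y⟫`, which by
Cauchy–Schwarz is dominated by `‖y‖² • ⟪x, x⟫`; in a unital C⋆-algebra anything dominating an
invertible positive element is invertible.
-/

open scoped InnerProductSpace

namespace CStarModule

variable {A E : Type*} [CStarAlgebra A] [PartialOrder A] [StarOrderedRing A] [AddCommGroup E]
  [Module ℂ E] [SMul A E] [Norm E] [CStarModule A E]

lemma isUnit_norm_sq_smul_inner_self_of_isUnit_inner {x y : E} (hy : IsUnit ⟪y, x⟫_A) :
    IsUnit (‖y‖ ^ 2 • ⟪x, x⟫_A) := by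
  have hpos : IsStrictlyPositive (⟪y, x⟫_A * star ⟪y, x⟫_A) :=
    (hy.mul hy.star).isStrictlyPositive (mul_star_self_nonneg _)
  have hle : ⟪y, x⟫_A * star ⟪y, x⟫_A ≤ ‖y‖ ^ 2 • ⟪x, x⟫_A := by
    simpa only [star_inner] using inner_mul_inner_swap_le (x := y) (y := x)
  exact CStarAlgebra.isUnit_of_le _ hle hpos

lemma isUnit_inner_self_of_isUnit_inner {x y : E} (hy : IsUnit ⟪y, x⟫_A) : IsUnit ⟪x, x⟫_A := by
  rcases eq_or_ne y 0 with rfl | hy0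
  · rw [inner_zero_left, isUnit_zero_iff] at hy
    have : Subsingleton A := subsingleton_of_zero_eq_one hy
    exact isUnit_of_subsingleton _
  · have hnorm : ‖y‖ ^ 2 ≠ 0 := pow_ne_zero _ (by rwa [Ne, norm_zero_iff A])
    exact (isUnit_smul_iff (Units.mk0 _ hnorm) _).mp
      (isUnit_norm_sq_smul_inner_self_of_isUnit_inner hy)

end CStarModule

open scoped CStarModule in
theorem inner_self_isUnit_iff_exists_inner_isUnit_general
    {B X : Type*} [CStarAlgebra B] [PartialOrder B] [StarOrderedRing B]
    [NormedAddCommGroup X] [Module ℂ X] [SMul B X] [CStarModule B X]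
    (x : X) :
    IsUnit (inner B x x : B) ↔ ∃ y : X, IsUnit (inner B y x : B) :=
  ⟨fun h => ⟨x, h⟩, fun ⟨_, hy⟩ => CStarModule.isUnit_inner_self_of_isUnit_inner hy⟩

/-- Let `B` be a unital C⋆-algebra and `X` a Hilbert C⋆-module over `B`.
For every `x ∈ X`, the inner product `⟪x, x⟫` is invertible in `B` if and only if there
exists `y ∈ X` such that `⟪y, x⟫` is invertible in `B`. -/
theorem inner_self_isUnit_iff_exists_inner_isUnit
    {B X : Type*} [CStarAlgebra B] [PartialOrder B] [StarOrderedRing B]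
    [NormedAddCommGroup X] [Module ℂ X] [SMul B X] [CStarModule B X] [CompleteSpace X]
    (x : X) :
    IsUnit (inner B x x : B) ↔ ∃ y : X, IsUnit (inner B y x : B) :=
  inner_self_isUnit_iff_exists_inner_isUnit_general x
end

section
/- Let A be a unital C*-algebra, N ≥ 1, p ∈ M_N(A) a projection, and X = A^N·p = {x ∈ M_{1×N}(A) : x·p = x}. For k ≥ 1 and x_1,…,x_k ∈ X, the tuple (x_1,…,x_k) generates X as a left A-module, i.e., A·x_1 + ⋯ + A·x_k = X, if and only if ∑_{i=1}^k x_i*x_i is invertible in the corner algebra pM_N(A)p, i.e., there exists c ∈ M_N(A) with c = pcp and c·(∑_i x_i*x_i) = p = (∑_i x_i*x_i)·c. -/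
/-! If `x₁, …, x_k` generate `X`, every row of `p` is an `A`-combination of the `xᵢ`, so
`p = ∑ bᵢ xᵢ` for columns `bᵢ`. In the C⋆-algebra `M_N(A)`, a Cauchy–Schwarz estimate turns this
into `p = p*p ≤ r • S` with `S = ∑ xᵢ*xᵢ`. Then `r • S + (1 - p) ≥ 1` is invertible and commutes
with `p`, and `p` times its inverse, rescaled by `r`, inverts `S` in the corner `p M_N(A) p`.
Conversely, if `c S = p` then every `v ∈ X` is `v = v c S = ∑ (v c xᵢ*) xᵢ`. -/

open Matrix

section StarOrderedRing

variable {R : Type*} [NonUnitalRing R] [StarRing R] [PartialOrder R] [StarOrderedRing R]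
  [Module ℝ R] [PosSMulMono ℝ R]

lemma star_sum_mul_sum_le_card_smul {ι : Type*} (s : Finset ι) (z : ι → R) :
    star (∑ i ∈ s, z i) * ∑ i ∈ s, z i ≤ s.card • ∑ i ∈ s, star (z i) * z i := by
  have expand : ∑ i ∈ s, ∑ j ∈ s, star (z i - z j) * (z i - z j)
      = 2 • (s.card • ∑ i ∈ s, star (z i) * z i - star (∑ i ∈ s, z i) * ∑ i ∈ s, z i) := by
    simp only [star_sub, sub_mul, mul_sub, Finset.sum_sub_distrib, star_sum, Finset.sum_mul,
      Finset.mul_sum, Finset.sum_const, Finset.smul_sum]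
    rw [Finset.sum_comm (s := s) (t := s) (f := fun i j => star (z j) * z i)]
    abel
  have two_smul_nonneg : (0 : R) ≤ 2 • (s.card • ∑ i ∈ s, star (z i) * z i
      - star (∑ i ∈ s, z i) * ∑ i ∈ s, z i) :=
    expand ▸ Finset.sum_nonneg fun i _ => Finset.sum_nonneg fun j _ => star_mul_self_nonneg _
  rw [← sub_nonneg]
  have := smul_nonneg (show (0 : ℝ) ≤ 2⁻¹ by norm_num) two_smul_nonneg
  rwa [← Nat.cast_smul_eq_nsmul ℝ, smul_smul, Nat.cast_two, inv_mul_cancel₀ two_ne_zero,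
    one_smul] at this

end StarOrderedRing

section NonUnitalCStarAlgebra

variable {B : Type*} [NonUnitalCStarAlgebra B] [PartialOrder B] [StarOrderedRing B]

lemma star_mul_self_mul_le_norm_sq_smul (d y : B) :
    star (d * y) * (d * y) ≤ ‖d‖ ^ 2 • (star y * y) := by
  have h := CStarAlgebra.star_left_conjugate_le_norm_smul (a := y) (b := star d * d)
  rw [CStarRing.norm_star_mul_self, ← sq] at h
  simpa only [star_mul, mul_assoc] using h

lemma star_sum_mul_sum_le_norm_sq_smul {ι : Type*} (s : Finset ι) (d y : ι → B) :
    star (∑ i ∈ s, d i * y i) * ∑ i ∈ s, d i * y i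
      ≤ (s.card * ∑ i ∈ s, ‖d i‖ ^ 2) • ∑ i ∈ s, star (y i) * y i := by
  calc star (∑ i ∈ s, d i * y i) * ∑ i ∈ s, d i * y i
      ≤ s.card • ∑ i ∈ s, star (d i * y i) * (d i * y i) := star_sum_mul_sum_le_card_smul s _
    _ ≤ s.card • ∑ i ∈ s, (∑ j ∈ s, ‖d j‖ ^ 2) • (star (y i) * y i) := by
      gcongr with i hi
      exact (star_mul_self_mul_le_norm_sq_smul _ _).trans <| smul_le_smul_of_nonneg_right
        (Finset.single_le_sum (fun j _ => sq_nonneg ‖d j‖) hi) (star_mul_self_nonneg _)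
    _ = (s.card * ∑ i ∈ s, ‖d i‖ ^ 2) • ∑ i ∈ s, star (y i) * y i := by
      rw [← Finset.smul_sum, ← Nat.cast_smul_eq_nsmul ℝ, smul_smul]

end NonUnitalCStarAlgebra

section CStarAlgebra

variable {B : Type*} [CStarAlgebra B] [PartialOrder B] [StarOrderedRing B]

lemma IsStarProjection.exists_corner_inverse_of_le {p s : B} (hp : IsStarProjection p)
    (hs : IsSelfAdjoint s) (hsp : s * p = s) (hle : p ≤ s) :
    ∃ c, c = p * c * p ∧ c * s = p ∧ s * c = p := by
  have hps : p * s = s := by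
    simpa [hs.star_eq, hp.isSelfAdjoint.star_eq] using congrArg star hsp
  have hpp : p * p = p := hp.isIdempotentElem.eq
  obtain ⟨u, hu⟩ : IsUnit (s + (1 - p)) :=
    CStarAlgebra.isUnit_of_le 1 (by simpa using add_le_add_left hle (1 - p))
      isStrictlyPositive_one
  have hpu : p * u = s := by rw [hu, mul_add, mul_sub, mul_one, hpp, hps, sub_self, add_zero]
  have hup : u * p = s := by rw [hu, add_mul, sub_mul, one_mul, hpp, hsp, sub_self, add_zero]
  have hcomm : Commute p ↑u⁻¹ := Commute.units_inv_right (hpu.trans hup.symm)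
  refine ⟨p * ↑u⁻¹, ?_, ?_, ?_⟩
  · simp only [← mul_assoc, hpp]
    rw [mul_assoc, ← hcomm.eq, ← mul_assoc, hpp]
  · rw [← hup, mul_assoc, Units.inv_mul_cancel_left, hpp]
  · rw [← mul_assoc, hsp, ← hpu, Units.mul_inv_cancel_right]

lemma IsStarProjection.exists_corner_inverse_of_le_smul {p s : B} (hp : IsStarProjection p)
    (hs : IsSelfAdjoint s) (hsp : s * p = s) {r : ℝ} (hle : p ≤ r • s) :
    ∃ c, c = p * c * p ∧ c * s = p ∧ s * c = p := by
  obtain ⟨c, hc, hcs, hsc⟩ :=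
    hp.exists_corner_inverse_of_le ((IsSelfAdjoint.all r).smul hs)
      (by rw [smul_mul_assoc, hsp]) hle
  refine ⟨r • c, ?_, ?_, ?_⟩
  · rw [mul_smul_comm, smul_mul_assoc, ← hc]
  · rwa [smul_mul_assoc, ← mul_smul_comm]
  · rwa [mul_smul_comm, ← smul_mul_assoc]

end CStarAlgebra

namespace Matrix

lemma replicateRow_apply_mul_of_mul_self {n ι R : Type*} [Fintype n]
    [NonUnitalNonAssocSemiring R] {p : Matrix n n R} (hp : p * p = p) (j : n) :
    replicateRow ι (p j) * p = replicateRow ι (p j) := by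
  rw [← replicateRow_vecMul, ← mul_apply_eq_vecMul, hp]

lemma eq_sum_replicateCol_mul_of_rows {m n ι R : Type*} [Fintype ι]
    [NonUnitalNonAssocSemiring R] (M : Matrix m n R) (x : ι → Matrix (Fin 1) n R)
    (b : m → ι → R) (h : ∀ j, ∑ i, b j i • x i = replicateRow (Fin 1) (M j)) :
    M = ∑ i, replicateCol (Fin 1) (fun j => b j i) * x i := by
  ext j l
  simpa [mul_apply, sum_apply] using (congrFun (congrFun (h j) 0) l).symm

lemma sum_apply_smul_eq_mul_sum {m n ι R : Type*} [Fintype m] [Fintype ι] [Semiring R]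
    (w : Matrix (Fin 1) m R) (y : ι → Matrix m (Fin 1) R) (x : ι → Matrix (Fin 1) n R) :
    ∑ i, (w * y i) 0 0 • x i = w * ∑ i, y i * x i := by
  ext r l
  simp only [Fin.fin_one_eq_zero r, sum_apply, smul_apply, mul_apply, smul_eq_mul,
    Finset.sum_mul, Finset.mul_sum, Fin.sum_univ_one, mul_assoc]
  exact Finset.sum_comm

lemma conjTranspose_single_mul_single_self {n R : Type*} [Fintype n] [DecidableEq n]
    [NonAssocSemiring R] [StarRing R] (j : n) :
    (single j 0 1 : Matrix n (Fin 1) R)ᴴ * (single j 0 1 : Matrix n (Fin 1) R) = 1 := by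
  rw [conjTranspose_single, star_one, single_mul_single_same, one_mul]
  ext a b
  fin_cases a; fin_cases b
  simp

end Matrix

namespace CStarMatrix

variable {A : Type*} [CStarAlgebra A] [PartialOrder A] [StarOrderedRing A]

lemma exists_ofMatrix_star_sum_mul_sum_le {n ι : Type*} [Fintype n] [DecidableEq n]
    (j : n) (s : Finset ι) (b : ι → Matrix n (Fin 1) A) (x : ι → Matrix (Fin 1) n A) :
    ∃ r : ℝ, ofMatrix ((∑ i ∈ s, b i * x i)ᴴ * ∑ i ∈ s, b i * x i)
      ≤ r • ofMatrix (∑ i ∈ s, (x i)ᴴ * x i) := by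
  -- `E` places a row as the `j`-th row of a square matrix; as `Eᴴ E = 1`, the column-times-row
  -- products `bᵢ xᵢ` factor through square matrices.
  set E : Matrix n (Fin 1) A := single j 0 1
  have hE : Eᴴ * E = 1 := conjTranspose_single_mul_single_self j
  have hbx : ∀ i, b i * x i = (b i * Eᴴ) * (E * x i) := fun i => by
    rw [Matrix.mul_assoc, ← Matrix.mul_assoc Eᴴ, hE, Matrix.one_mul]
  have hxx : ∀ i, (x i)ᴴ * x i = (E * x i)ᴴ * (E * x i) := fun i => by
    rw [conjTranspose_mul, Matrix.mul_assoc, ← Matrix.mul_assoc Eᴴ, hE, Matrix.one_mul]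
  simp only [hbx, hxx, ofMatrix_eq_ofMatrixStarAlgEquiv, map_mul, map_sum]
  exact ⟨_, star_sum_mul_sum_le_norm_sq_smul s _ _⟩

end CStarMatrix

theorem gen_rowSpace_iff_isUnit_corner_general (A : Type*) [CStarAlgebra A]
    (N : ℕ) (hN : 1 ≤ N)
    (p : Matrix (Fin N) (Fin N) A) (hp : p * p = p) (hps : pᴴ = p)
    (k : ℕ)
    (x : Fin k → Matrix (Fin 1) (Fin N) A) (hx : ∀ i, x i * p = x i) :
    (∀ v : Matrix (Fin 1) (Fin N) A, v * p = v →
        ∃ a : Fin k → A, ∑ i, a i • x i = v) ↔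
      ∃ c : Matrix (Fin N) (Fin N) A, c = p * c * p ∧
        c * (∑ i, (x i)ᴴ * x i) = p ∧ (∑ i, (x i)ᴴ * x i) * c = p := by
  let _ : PartialOrder A := CStarAlgebra.spectralOrder A
  have _ : StarOrderedRing A := CStarAlgebra.spectralOrderedRing A
  constructor
  · intro hgen
    choose b hb using fun j => hgen _ (replicateRow_apply_mul_of_mul_self hp j)
    obtain ⟨r, hr⟩ := CStarMatrix.exists_ofMatrix_star_sum_mul_sum_le ⟨0, hN⟩ Finset.univ
      (fun i => replicateCol (Fin 1) (b · i)) x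
    rw [← eq_sum_replicateCol_mul_of_rows p x b hb, hps, hp] at hr
    have hS : (∑ i, (x i)ᴴ * x i)ᴴ = ∑ i, (x i)ᴴ * x i := by
      simp [conjTranspose_sum]
    have hSp : (∑ i, (x i)ᴴ * x i) * p = ∑ i, (x i)ᴴ * x i := by
      simp only [Finset.sum_mul, Matrix.mul_assoc, hx]
    -- `CStarMatrix` is a type synonym of `Matrix` with the same product and star.
    exact IsStarProjection.exists_corner_inverse_of_le_smul (p := CStarMatrix.ofMatrix p)
      ⟨hp, hps⟩ hS hSp hr
  · rintro ⟨c, -, hcS, -⟩ v hv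
    exact ⟨fun i => (v * c * (x i)ᴴ) 0 0, by
      rw [sum_apply_smul_eq_mul_sum, Matrix.mul_assoc, hcS, hv]⟩

/-- Let `A` be a unital C⋆-algebra, `p ∈ M_N(A)` a projection, and
`X = Aᴺ·p = {x ∈ M_{1×N}(A) : x·p = x}`.  For `x₁, …, x_k ∈ X`, the tuple `(x₁, …, x_k)`
generates `X` as a left `A`-module if and only if `∑ᵢ xᵢᴴ * xᵢ` is invertible in the corner
algebra `p M_N(A) p`, i.e. there is `c ∈ M_N(A)` with `c = p c p` and
`c * (∑ᵢ xᵢᴴ xᵢ) = p = (∑ᵢ xᵢᴴ xᵢ) * c`. -/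
theorem gen_rowSpace_iff_isUnit_corner (A : Type*) [CStarAlgebra A]
    (N : ℕ) (hN : 1 ≤ N)
    (p : Matrix (Fin N) (Fin N) A) (hp : p * p = p) (hps : pᴴ = p)
    (k : ℕ) (hk : 1 ≤ k)
    (x : Fin k → Matrix (Fin 1) (Fin N) A) (hx : ∀ i, x i * p = x i) :
    (∀ v : Matrix (Fin 1) (Fin N) A, v * p = v →
        ∃ a : Fin k → A, ∑ i, a i • x i = v) ↔
      ∃ c : Matrix (Fin N) (Fin N) A, c = p * c * p ∧
        c * (∑ i, (x i)ᴴ * x i) = p ∧ (∑ i, (x i)ᴴ * x i) * c = p :=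
  gen_rowSpace_iff_isUnit_corner_general A N hN p hp hps k x hx
end

section
/- Let A be a unital C*-algebra, n, m ≥ 1, k ≥ 1, and x_1,…,x_{k+1} ∈ M_{n×m}(A). The following are equivalent: (a) there exist a_1,…,a_k ∈ M_n(A) such that ∑_{i=1}^k (x_i + a_i·x_{k+1})*(x_i + a_i·x_{k+1}) is invertible in M_m(A); (b) there exist y_1,…,y_{k+1} ∈ M_{n×m}(A) such that ∑_{i=1}^{k+1} y_i*x_i = 1 (the identity of M_m(A)) and ∑_{i=1}^k y_i*y_i is invertible in M_m(A). -/
/-!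
Put `zᵢ = xᵢ + aᵢ x_{k+1}` and `S = ∑ zᵢᴴ zᵢ`. If `S` is invertible with inverse `T`, then
`yᵢ = zᵢ Tᴴ`, `y_{k+1} = (∑ aᵢᴴ zᵢ) Tᴴ` satisfy `∑ yᵢᴴ xᵢ = T S = 1` and `∑_{i ≤ k} yᵢᴴ yᵢ = Tᴴ`.
Conversely, if `G = ∑_{i ≤ k} yᵢᴴ yᵢ` is invertible, then `aᵢ = yᵢ G⁻¹ y_{k+1}ᴴ` gives
`∑_{i ≤ k} yᵢᴴ zᵢ = 1`. The C⋆-algebraic content is that `∑ yᵢᴴ zᵢ = 1` forces `∑ zᵢᴴ zᵢ` to be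
invertible: by the Cauchy–Schwarz inequality in the Hilbert module `Bᵏ` over a C⋆-algebra `B`,
`1 = ⟨z, y⟩⟨y, z⟩ ≤ ‖y‖² ⟨z, z⟩`. Rectangular matrices are brought into `B = M_m(A)` row by row.
-/

open Matrix

open scoped InnerProductSpace WithCStarModule in
theorem isUnit_sum_star_mul_self_of_sum_star_mul_eq_one {B ι : Type*} [CStarAlgebra B]
    [PartialOrder B] [StarOrderedRing B] [Fintype ι] (b a : ι → B)
    (h : ∑ i, star (b i) * a i = 1) : IsUnit (∑ i, star (a i) * a i) := by
  nontriviality B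
  -- the inner product of `C⋆ᵐᵒᵈ(B, ι → B)` is `⟪u, v⟫ = ∑ vᵢ * star uᵢ`, hence the stars
  let u : C⋆ᵐᵒᵈ(B, ι → B) := (WithCStarModule.equiv B (ι → B)).symm fun i => star (b i)
  let v : C⋆ᵐᵒᵈ(B, ι → B) := (WithCStarModule.equiv B (ι → B)).symm fun i => star (a i)
  have huv : ⟪u, v⟫_B = 1 := by
    simpa [WithCStarModule.pi_inner, WithCStarModule.inner_def, u, v, star_sum]
      using congrArg star h
  have hvu : ⟪v, u⟫_B = 1 := by
    simpa [WithCStarModule.pi_inner, WithCStarModule.inner_def, u, v] using h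
  have hvv : ⟪v, v⟫_B = ∑ i, star (a i) * a i := by
    simp [WithCStarModule.pi_inner, WithCStarModule.inner_def, v]
  have hu : u ≠ 0 := by
    intro hu
    rw [hu, CStarModule.inner_zero_left] at huv
    exact zero_ne_one huv
  have hpos : 0 < ‖u‖ ^ 2 := pow_pos (CStarModule.norm_pos B hu) 2
  have hcs := CStarModule.inner_mul_inner_swap_le (A := B) (x := u) (y := v)
  rw [huv, hvu, one_mul, hvv] at hcs
  exact (isUnit_smul_iff (Units.mk0 _ hpos.ne') _).mp (CStarAlgebra.isUnit_of_le 1 hcs)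

namespace Matrix

theorem conjTranspose_mul_eq_sum_updateRow {R p q : Type*} [NonUnitalSemiring R] [StarRing R]
    [Fintype p] [Fintype q] [DecidableEq q] (M N : Matrix p q R) (j : q) :
    Mᴴ * N = ∑ r, (updateRow 0 j (M r))ᴴ * updateRow 0 j (N r) := by
  ext a b
  simp [mul_apply, updateRow_apply, sum_apply]

theorem isUnit_sum_conjTranspose_mul_self_of_sum_conjTranspose_mul_eq_one
    {A ι p q : Type*} [CStarAlgebra A] [PartialOrder A] [StarOrderedRing A]
    [Fintype ι] [Fintype p] [Fintype q] [DecidableEq q] (y z : ι → Matrix p q A)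
    (h : ∑ i, (y i)ᴴ * z i = 1) : IsUnit (∑ i, (z i)ᴴ * z i) := by
  cases isEmpty_or_nonempty q with
  | inl => exact isUnit_of_subsingleton _
  | inr hq =>
    obtain ⟨j⟩ := hq
    let e := CStarMatrix.ofMatrixStarAlgEquiv (n := q) (A := A)
    let row (M : Matrix p q A) (r : p) : CStarMatrix q q A := e (updateRow 0 j (M r))
    have hsum (M N : ι → Matrix p q A) :
        ∑ s : ι × p, star (row (M s.1) s.2) * row (N s.1) s.2 = e (∑ i, (M i)ᴴ * N i) := by
      simp only [row, ← map_star, ← map_mul, ← map_sum, Fintype.sum_prod_type,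
        star_eq_conjTranspose, ← conjTranspose_mul_eq_sum_updateRow]
    have := isUnit_sum_star_mul_self_of_sum_star_mul_eq_one (fun s : ι × p => row (y s.1) s.2)
      (fun s : ι × p => row (z s.1) s.2) (by rw [hsum, h, map_one])
    rwa [hsum, MulEquiv.isUnit_map] at this

variable {R ι p q : Type*} [Ring R] [StarRing R] [Fintype ι] [Fintype p] [Fintype q] [DecidableEq q]

theorem exists_sum_conjTranspose_mul_add_eq_one_of_isUnit (x : ι → Matrix p q R)
    (x₀ : Matrix p q R) (a : ι → Matrix p p R)
    (h : IsUnit (∑ i, (x i + a i * x₀)ᴴ * (x i + a i * x₀))) :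
    ∃ (y : ι → Matrix p q R) (y₀ : Matrix p q R),
      ∑ i, (y i)ᴴ * x i + y₀ᴴ * x₀ = 1 ∧ IsUnit (∑ i, (y i)ᴴ * y i) := by
  set z := fun i => x i + a i * x₀ with hz
  have hTu : IsUnit (Ring.inverse (∑ i, (z i)ᴴ * z i))ᴴ := h.ringInverse.star
  set T := Ring.inverse (∑ i, (z i)ᴴ * z i)
  have hT : T * ∑ i, (z i)ᴴ * z i = 1 := Ring.inverse_mul_cancel _ h
  clear_value z T
  refine ⟨fun i => z i * Tᴴ, (∑ i, (a i)ᴴ * z i) * Tᴴ, ?_, ?_⟩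
  · calc ∑ i, (z i * Tᴴ)ᴴ * x i + ((∑ i, (a i)ᴴ * z i) * Tᴴ)ᴴ * x₀
          = T * ∑ i, (z i)ᴴ * (x i + a i * x₀) := by
            simp only [conjTranspose_mul, conjTranspose_conjTranspose, conjTranspose_sum,
              Matrix.mul_sum, Matrix.sum_mul, Matrix.mul_add, Finset.sum_add_distrib,
              Matrix.mul_assoc]
      _ = T * ∑ i, (z i)ᴴ * z i := by rw [hz]
      _ = 1 := hT
  · convert hTu using 1
    calc ∑ i, (z i * Tᴴ)ᴴ * (z i * Tᴴ) = T * (∑ i, (z i)ᴴ * z i) * Tᴴ := by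
          simp [Finset.mul_sum, Finset.sum_mul, Matrix.mul_assoc]
      _ = Tᴴ := by rw [hT, Matrix.one_mul]

theorem sum_conjTranspose_mul_add_mul_eq_one (x y : ι → Matrix p q R) (x₀ y₀ : Matrix p q R)
    (hyx : ∑ i, (y i)ᴴ * x i + y₀ᴴ * x₀ = 1) (hy : IsUnit (∑ i, (y i)ᴴ * y i)) :
    ∑ i, (y i)ᴴ * (x i + y i * Ring.inverse (∑ j, (y j)ᴴ * y j) * y₀ᴴ * x₀) = 1 := by
  calc _ = ∑ i, (y i)ᴴ * x i
        + (∑ i, (y i)ᴴ * y i) * Ring.inverse (∑ j, (y j)ᴴ * y j) * (y₀ᴴ * x₀) := by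
          simp [Matrix.mul_add, Finset.sum_add_distrib, Finset.sum_mul, Matrix.mul_assoc]
    _ = 1 := by rw [Ring.mul_inverse_cancel _ hy, Matrix.one_mul, hyx]

end Matrix

theorem warfield_condition_matrix_general (A : Type*) [CStarAlgebra A]
    (n m k : ℕ)
    (x : Fin (k + 1) → Matrix (Fin n) (Fin m) A) :
    (∃ a : Fin k → Matrix (Fin n) (Fin n) A,
        IsUnit (∑ i : Fin k, (x i.castSucc + a i * x (Fin.last k))ᴴ *
          (x i.castSucc + a i * x (Fin.last k)))) ↔
      ∃ y : Fin (k + 1) → Matrix (Fin n) (Fin m) A,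
        (∑ i, (y i)ᴴ * x i) = 1 ∧
          IsUnit (∑ i : Fin k, (y i.castSucc)ᴴ * y i.castSucc) := by
  constructor
  · rintro ⟨a, ha⟩
    obtain ⟨y, y₀, hyx, hy⟩ := exists_sum_conjTranspose_mul_add_eq_one_of_isUnit _ _ a ha
    refine ⟨Fin.snoc y y₀, ?_, ?_⟩
    · simpa [Fin.sum_univ_castSucc] using hyx
    · simpa using hy
  · rintro ⟨y, hyx, hy⟩
    rw [Fin.sum_univ_castSucc] at hyx
    let := CStarAlgebra.spectralOrder A
    let := CStarAlgebra.spectralOrderedRing A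
    exact ⟨_, isUnit_sum_conjTranspose_mul_self_of_sum_conjTranspose_mul_eq_one _ _
      (sum_conjTranspose_mul_add_mul_eq_one _ _ _ _ hyx hy)⟩

/-- Warfield condition for matrix modules.  Let `A` be a unital
C⋆-algebra, `n, m, k ≥ 1`, and `x₁, …, x_{k+1} ∈ M_{n×m}(A)`.  The following are
equivalent: (a) there are `a₁, …, a_k ∈ M_n(A)` such that
`∑ᵢ (xᵢ + aᵢ x_{k+1})ᴴ (xᵢ + aᵢ x_{k+1})` is invertible in `M_m(A)`; (b) there are
`y₁, …, y_{k+1} ∈ M_{n×m}(A)` with `∑ᵢ yᵢᴴ xᵢ = 1` and `∑_{i≤k} yᵢᴴ yᵢ` invertible in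
`M_m(A)`. -/
theorem warfield_condition_matrix (A : Type*) [CStarAlgebra A]
    (n m k : ℕ) (hn : 1 ≤ n) (hm : 1 ≤ m) (hk : 1 ≤ k)
    (x : Fin (k + 1) → Matrix (Fin n) (Fin m) A) :
    (∃ a : Fin k → Matrix (Fin n) (Fin n) A,
        IsUnit (∑ i : Fin k, (x i.castSucc + a i * x (Fin.last k))ᴴ *
          (x i.castSucc + a i * x (Fin.last k)))) ↔
      ∃ y : Fin (k + 1) → Matrix (Fin n) (Fin m) A,
        (∑ i, (y i)ᴴ * x i) = 1 ∧
          IsUnit (∑ i : Fin k, (y i.castSucc)ᴴ * y i.castSucc) :=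
  warfield_condition_matrix_general A n m k x
end

section
/- Let A be a unital C*-algebra, N ≥ 1, p ∈ M_N(A) a projection, X = A^N·p = {x ∈ M_{1×N}(A) : x·p = x}, k ≥ 1, and x_1,…,x_{k+1} ∈ X. The following are equivalent: (a) there exist a_1,…,a_k ∈ A such that ∑_{i=1}^k (x_i + a_i·x_{k+1})*(x_i + a_i·x_{k+1}) is invertible in the corner pM_N(A)p; (b) there exist y_1,…,y_{k+1} ∈ X such that ∑_{i=1}^{k+1} y_i*x_i = p and ∑_{i=1}^k y_i*y_i is invertible in the corner pM_N(A)p. -/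
open Matrix

/-- An element `b` of the corner `p M_N(A) p` is invertible in the corner if there is
`c ∈ p M_N(A) p` with `c * b = p = b * c`. -/
def CornerIsUnit {A : Type*} [Ring A] {N : ℕ}
    (p b : Matrix (Fin N) (Fin N) A) : Prop :=
  ∃ c : Matrix (Fin N) (Fin N) A, c = p * c * p ∧ c * b = p ∧ b * c = p

/-!
Write `zᵢ = xᵢ + aᵢ • x_{k+1}` and `B = ∑ zᵢᴴ zᵢ`.

(a) ⇒ (b): if `c` is the corner inverse of `B`, the rows `yᵢ = zᵢ cᴴ` (`i ≤ k`) and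
`y_{k+1} = ∑ star aᵢ • yᵢ` satisfy `∑ yᵢᴴ xᵢ = c B = p`, and their Gram matrix `c B cᴴ = cᴴ` is
invertible in the corner.

(b) ⇒ (a): if `e` is the corner inverse of `D = ∑_{i ≤ k} yᵢᴴ yᵢ`, the scalars
`aᵢ = yᵢ e y_{k+1}ᴴ` give `∑_{i ≤ k} yᵢᴴ zᵢ = p`. Stacking the rows into `k × N` matrices `Y`, `Z`
this reads `Yᴴ Z = p`, hence `p = pᴴ p = Zᴴ (Y Yᴴ) Z ≤ ‖Y Yᴴ‖ • Zᴴ Z = ‖Y Yᴴ‖ • B` in the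
C⋆-algebra `M_N(A)`. So `B` dominates a multiple of `p`, which makes `B + (1 - p)` invertible and
`B` invertible in the corner.
-/

section Corner

variable {A : Type*} [Ring A] {N : ℕ} {p b c : Matrix (Fin N) (Fin N) A}

theorem mul_corner_mul (hp : p * p = p) (x : Matrix (Fin N) (Fin N) A) :
    p * (p * x * p) * p = p * x * p := by
  simp only [← mul_assoc, hp]
  rw [mul_assoc _ p p, hp]

theorem cornerIsUnit_of_inverse (hp : p * p = p) (hc : c = p * c * p) (hcb : c * b = p)
    (hbc : b * c = p) : CornerIsUnit p c := by
  have hpc : p * c = c := by rw [hc, ← mul_assoc, ← mul_assoc, hp]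
  have hcp : c * p = c := by rw [hc, mul_assoc, hp]
  refine ⟨p * b * p, (mul_corner_mul hp b).symm, ?_, ?_⟩
  · rw [mul_assoc, hpc, mul_assoc, hbc, hp]
  · rw [← mul_assoc, ← mul_assoc, hcp, hcb, hp]

theorem CornerIsUnit.conjTranspose [StarRing A] (hps : pᴴ = p) (h : CornerIsUnit p b) :
    CornerIsUnit p bᴴ := by
  obtain ⟨c, hc, hcb, hbc⟩ := h
  refine ⟨cᴴ, ?_, ?_, ?_⟩
  · conv_lhs => rw [hc]
    simp only [conjTranspose_mul, hps, Matrix.mul_assoc]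
  · rw [← conjTranspose_mul, hbc, hps]
  · rw [← conjTranspose_mul, hcb, hps]

theorem cornerIsUnit_of_isUnit_add_one_sub (hp : p * p = p) (hpb : p * b = b) (hbp : b * p = b)
    (h : IsUnit (b + (1 - p))) : CornerIsUnit p b := by
  obtain ⟨u, hu⟩ := h
  have hl : p * (b + (1 - p)) = b := by rw [mul_add, mul_sub, mul_one, hp, hpb, sub_self, add_zero]
  have hr : (b + (1 - p)) * p = b := by rw [add_mul, sub_mul, one_mul, hp, hbp, sub_self, add_zero]
  refine ⟨p * ↑u⁻¹ * p, (mul_corner_mul hp _).symm, ?_, ?_⟩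
  · calc p * ↑u⁻¹ * p * b = p * ↑u⁻¹ * b := by rw [mul_assoc _ p b, hpb]
      _ = p * (↑u⁻¹ * (b + (1 - p))) * p := by simp only [mul_assoc, hr]
      _ = p := by rw [← hu, u.inv_mul, mul_one, hp]
  · calc b * (p * ↑u⁻¹ * p) = b * ↑u⁻¹ * p := by rw [← mul_assoc, ← mul_assoc, hbp]
      _ = p * ((b + (1 - p)) * ↑u⁻¹) * p := by simp only [← mul_assoc, hl]
      _ = p := by rw [← hu, u.mul_inv, mul_one, hp]

end Corner

section Rows

variable {ι n : Type*} {A : Type*}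

def stackRows (v : ι → Matrix (Fin 1) n A) : Matrix ι n A := Matrix.of fun i => v i 0

theorem stackRows_mul [Semiring A] {n' : Type*} [Fintype n] (v : ι → Matrix (Fin 1) n A)
    (M : Matrix n n' A) : stackRows v * M = stackRows fun i => v i * M := by
  ext i j
  simp [stackRows, Matrix.mul_apply]

theorem conjTranspose_stackRows_mul_stackRows [Semiring A] [StarRing A] [Fintype ι]
    (v w : ι → Matrix (Fin 1) n A) : (stackRows v)ᴴ * stackRows w = ∑ i, (v i)ᴴ * w i := by
  ext j l
  simp [stackRows, Matrix.mul_apply, Matrix.sum_apply]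

theorem entry_smul_eq_mul [Semiring A] (M : Matrix (Fin 1) (Fin 1) A) (w : Matrix (Fin 1) n A) :
    M 0 0 • w = M * w := by
  ext i j
  simp [Matrix.mul_apply, Subsingleton.elim i 0]

theorem conjTranspose_star_smul_mul [Semiring A] [StarRing A] [Fintype ι] {l : Type*} (a : A)
    (v : Matrix ι n A) (w : Matrix ι l A) : (star a • v)ᴴ * w = vᴴ * (a • w) := by
  ext i j
  simp [Matrix.mul_apply, mul_assoc]

end Rows

section Positivity

variable {A : Type*} [CStarAlgebra A] [PartialOrder A] [StarOrderedRing A]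
  {m n : Type*} [Fintype m] [Fintype n]

open CStarMatrix

theorem CStarMatrix.ofMatrix_conjTranspose_mul_self_nonneg (w : Matrix m n A) :
    0 ≤ ofMatrix (wᴴ * w) := by
  rcases isEmpty_or_nonempty n with _ | ⟨⟨i₀⟩⟩
  · exact le_of_eq (ext fun i => isEmptyElim i)
  · classical
    let row (r : m) : Matrix n n A := Matrix.of fun i j => if i = i₀ then w r j else 0
    have : wᴴ * w = ∑ r, (row r)ᴴ * row r := by
      ext i j
      simp [row, Matrix.mul_apply, Matrix.sum_apply]
    rw [this]
    exact Finset.sum_nonneg fun r _ => star_mul_self_nonneg (ofMatrix (row r))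

theorem CStarMatrix.ofMatrix_conjTranspose_mul_mul_nonneg (w : Matrix m n A) {T : Matrix m m A}
    (hT : 0 ≤ ofMatrix T) : 0 ≤ ofMatrix (wᴴ * T * w) := by
  suffices ∀ T' : CStarMatrix m m A, 0 ≤ T' → 0 ≤ ofMatrix (wᴴ * ofMatrix.symm T' * w) from
    this _ hT
  intro T' hT'
  rw [StarOrderedRing.nonneg_iff] at hT'
  induction hT' using AddSubmonoid.closure_induction with
  | mem _ hs =>
    obtain ⟨s, rfl⟩ := hs
    change 0 ≤ ofMatrix (wᴴ * ((ofMatrix.symm s)ᴴ * ofMatrix.symm s) * w)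
    rw [show wᴴ * ((ofMatrix.symm s)ᴴ * ofMatrix.symm s) * w =
        (ofMatrix.symm s * w)ᴴ * (ofMatrix.symm s * w) by
      simp only [conjTranspose_mul, Matrix.mul_assoc]]
    exact ofMatrix_conjTranspose_mul_self_nonneg _
  | zero =>
    change 0 ≤ ofMatrix (wᴴ * (0 : Matrix m m A) * w)
    rw [Matrix.mul_zero, Matrix.zero_mul]
    exact le_rfl
  | add x y _ _ hx hy =>
    change 0 ≤ ofMatrix (wᴴ * (ofMatrix.symm x + ofMatrix.symm y) * w)
    rw [Matrix.mul_add, Matrix.add_mul]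
    exact add_nonneg hx hy

end Positivity

theorem isUnit_add_one_sub_of_le_smul {A : Type*} [CStarAlgebra A] [PartialOrder A]
    [StarOrderedRing A] {p b : A} (hp : IsStarProjection p) (hb : 0 ≤ b) {c : ℝ} (hc : 0 ≤ c)
    (hpb : p ≤ c • b) : IsUnit (b + (1 - p)) := by
  have h : 1 ≤ (c + 1) • (b + (1 - p)) := by
    have : (c + 1) • (b + (1 - p)) - 1 = (c • b - p) + b + c • (1 - p) := by module
    rw [← sub_nonneg, this]
    exact add_nonneg (add_nonneg (sub_nonneg.mpr hpb) hb) (smul_nonneg hc hp.one_sub_nonneg)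
  exact (isUnit_smul_iff (Units.mk0 (c + 1) (by positivity)) _).mp (CStarAlgebra.isUnit_of_le 1 h)

theorem cornerIsUnit_sum_conjTranspose_mul_self {A : Type*} [CStarAlgebra A] {N : ℕ}
    {p : Matrix (Fin N) (Fin N) A} (hp : p * p = p) (hps : pᴴ = p) {ι : Type*} [Fintype ι]
    {v z : ι → Matrix (Fin 1) (Fin N) A} (hz : ∀ i, z i * p = z i)
    (hvz : ∑ i, (v i)ᴴ * z i = p) : CornerIsUnit p (∑ i, (z i)ᴴ * z i) := by
  classical
  let _ := CStarAlgebra.spectralOrder A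
  have _ := CStarAlgebra.spectralOrderedRing A
  set Y := stackRows v
  set Z := stackRows z
  have hZp : Z * p = Z := by simp only [Z, stackRows_mul, hz]
  have hpZ : p * Zᴴ = Zᴴ := by rw [← hps, ← conjTranspose_mul, hZp]
  have hYZ : Yᴴ * Z = p := (conjTranspose_stackRows_mul_stackRows v z).trans hvz
  rw [← conjTranspose_stackRows_mul_stackRows]
  set T := Y * Yᴴ
  have hle : CStarMatrix.ofMatrix p ≤
      ‖CStarMatrix.ofMatrix T‖ • CStarMatrix.ofMatrix (Zᴴ * Z) := by
    have hT : IsSelfAdjoint (CStarMatrix.ofMatrix T) := by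
      change (Y * Yᴴ)ᴴ = Y * Yᴴ
      rw [conjTranspose_mul, conjTranspose_conjTranspose]
    have hZTZ : Zᴴ * T * Z = p := calc
      Zᴴ * T * Z = (Yᴴ * Z)ᴴ * (Yᴴ * Z) := by
        simp only [T, conjTranspose_mul, conjTranspose_conjTranspose, Matrix.mul_assoc]
      _ = p := by rw [hYZ, hps, hp]
    have h := CStarMatrix.ofMatrix_conjTranspose_mul_mul_nonneg Z
      (T := algebraMap ℝ (Matrix ι ι A) ‖CStarMatrix.ofMatrix T‖ - T)
      (sub_nonneg.mpr hT.le_algebraMap_norm_self)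
    rw [Algebra.algebraMap_eq_smul_one, Matrix.mul_sub, Matrix.sub_mul, Matrix.mul_smul,
      Matrix.mul_one, Matrix.smul_mul, hZTZ] at h
    exact sub_nonneg.mp h
  refine cornerIsUnit_of_isUnit_add_one_sub hp (by rw [← Matrix.mul_assoc, hpZ])
    (by rw [Matrix.mul_assoc, hZp]) ?_
  exact isUnit_add_one_sub_of_le_smul (A := CStarMatrix (Fin N) (Fin N) A) ⟨hp, hps⟩
    (CStarMatrix.ofMatrix_conjTranspose_mul_self_nonneg Z) (norm_nonneg _) hle

section Warfield

variable {A : Type*} [Ring A] [StarRing A] {N : ℕ}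

theorem exists_dual_rows_of_cornerIsUnit {p : Matrix (Fin N) (Fin N) A}
    (hp : p * p = p) (hps : pᴴ = p) {k : ℕ} (x : Fin (k + 1) → Matrix (Fin 1) (Fin N) A)
    (a : Fin k → A)
    (h : CornerIsUnit p (∑ i : Fin k, (x i.castSucc + a i • x (Fin.last k))ᴴ *
      (x i.castSucc + a i • x (Fin.last k)))) :
    ∃ y : Fin (k + 1) → Matrix (Fin 1) (Fin N) A, (∀ i, y i * p = y i) ∧
      (∑ i, (y i)ᴴ * x i) = p ∧ CornerIsUnit p (∑ i : Fin k, (y i.castSucc)ᴴ * y i.castSucc) := by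
  obtain ⟨c, hc, hcB, hBc⟩ := h
  have hcp : cᴴ * p = cᴴ := by
    rw [hc]; simp only [conjTranspose_mul, hps, Matrix.mul_assoc, hp]
  have hpc : p * cᴴ = cᴴ := by
    rw [hc]; simp only [conjTranspose_mul, hps, ← Matrix.mul_assoc, hp]
  refine ⟨Fin.snoc (fun i => (x i.castSucc + a i • x (Fin.last k)) * cᴴ)
    (∑ i, star (a i) • ((x i.castSucc + a i • x (Fin.last k)) * cᴴ)), ?_, ?_, ?_⟩
  · intro i
    induction i using Fin.lastCases <;>
      simp [Matrix.sum_mul, Matrix.mul_assoc, hcp]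
  · rw [Fin.sum_univ_castSucc]
    simp only [Fin.snoc_castSucc, Fin.snoc_last, conjTranspose_sum, Matrix.sum_mul,
      conjTranspose_star_smul_mul, ← Finset.sum_add_distrib, ← Matrix.mul_add]
    simpa only [conjTranspose_mul, conjTranspose_conjTranspose, Matrix.mul_assoc,
      ← Matrix.mul_sum] using hcB
  · have hsum : ∑ i : Fin k, ((x i.castSucc + a i • x (Fin.last k)) * cᴴ)ᴴ *
        ((x i.castSucc + a i • x (Fin.last k)) * cᴴ) = cᴴ := calc
      _ = c * (∑ i : Fin k, (x i.castSucc + a i • x (Fin.last k))ᴴ *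
          (x i.castSucc + a i • x (Fin.last k))) * cᴴ := by
        simp only [Matrix.mul_sum, Matrix.sum_mul, conjTranspose_mul, conjTranspose_conjTranspose,
          Matrix.mul_assoc]
      _ = cᴴ := by rw [hcB, hpc]
    simpa only [Fin.snoc_castSucc, hsum] using
      (cornerIsUnit_of_inverse hp hc hcB hBc).conjTranspose hps

theorem sum_conjTranspose_mul_add_smul_last_eq {p e : Matrix (Fin N) (Fin N) A} {k : ℕ}
    (x y : Fin (k + 1) → Matrix (Fin 1) (Fin N) A)
    (hpy : p * (y (Fin.last k))ᴴ = (y (Fin.last k))ᴴ)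
    (hDe : (∑ i : Fin k, (y i.castSucc)ᴴ * y i.castSucc) * e = p)
    (hyx : ∑ i, (y i)ᴴ * x i = p) :
    ∑ i : Fin k, (y i.castSucc)ᴴ * (x i.castSucc +
      (y i.castSucc * e * (y (Fin.last k))ᴴ) 0 0 • x (Fin.last k)) = p := by
  simp only [Matrix.mul_add, entry_smul_eq_mul, Finset.sum_add_distrib]
  rw [← hyx, Fin.sum_univ_castSucc]
  congr 1
  simp only [← Matrix.mul_assoc]
  rw [← Matrix.sum_mul, ← Matrix.sum_mul, ← Matrix.sum_mul, hDe, hpy]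

end Warfield

theorem warfield_condition_rowSpace_general (A : Type*) [CStarAlgebra A]
    (N : ℕ)
    (p : Matrix (Fin N) (Fin N) A) (hp : p * p = p) (hps : pᴴ = p)
    (k : ℕ)
    (x : Fin (k + 1) → Matrix (Fin 1) (Fin N) A) (hx : ∀ i, x i * p = x i) :
    (∃ a : Fin k → A,
        CornerIsUnit p (∑ i : Fin k, (x i.castSucc + a i • x (Fin.last k))ᴴ *
          (x i.castSucc + a i • x (Fin.last k)))) ↔
      ∃ y : Fin (k + 1) → Matrix (Fin 1) (Fin N) A, (∀ i, y i * p = y i) ∧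
        (∑ i, (y i)ᴴ * x i) = p ∧
          CornerIsUnit p (∑ i : Fin k, (y i.castSucc)ᴴ * y i.castSucc) := by
  refine ⟨fun ⟨a, h⟩ => exists_dual_rows_of_cornerIsUnit hp hps x a h, ?_⟩
  rintro ⟨y, hy, hyx, e, -, -, hDe⟩
  have hpy : p * (y (Fin.last k))ᴴ = (y (Fin.last k))ᴴ := by
    rw [← hps, ← conjTranspose_mul, hy]
  refine ⟨fun i => (y i.castSucc * e * (y (Fin.last k))ᴴ) 0 0, ?_⟩
  refine cornerIsUnit_sum_conjTranspose_mul_self hp hps (fun i => ?_)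
    (sum_conjTranspose_mul_add_smul_last_eq x y hpy hDe hyx)
  rw [Matrix.add_mul, Matrix.smul_mul, hx, hx]

/-- Warfield condition for `X = Aᴺ·p`.  Let `A` be a unital C⋆-algebra,
`p ∈ M_N(A)` a projection, `X = {x ∈ M_{1×N}(A) : x·p = x}`, `k ≥ 1`, and
`x₁, …, x_{k+1} ∈ X`.  The following are equivalent: (a) there are `a₁, …, a_k ∈ A` such
that `∑ᵢ (xᵢ + aᵢ·x_{k+1})ᴴ (xᵢ + aᵢ·x_{k+1})` is invertible in the corner `p M_N(A) p`;
(b) there are `y₁, …, y_{k+1} ∈ X` with `∑ᵢ yᵢᴴ xᵢ = p` and `∑_{i≤k} yᵢᴴ yᵢ` invertible in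
the corner `p M_N(A) p`. -/
theorem warfield_condition_rowSpace (A : Type*) [CStarAlgebra A]
    (N : ℕ) (hN : 1 ≤ N)
    (p : Matrix (Fin N) (Fin N) A) (hp : p * p = p) (hps : pᴴ = p)
    (k : ℕ) (hk : 1 ≤ k)
    (x : Fin (k + 1) → Matrix (Fin 1) (Fin N) A) (hx : ∀ i, x i * p = x i) :
    (∃ a : Fin k → A,
        CornerIsUnit p (∑ i : Fin k, (x i.castSucc + a i • x (Fin.last k))ᴴ *
          (x i.castSucc + a i • x (Fin.last k)))) ↔
      ∃ y : Fin (k + 1) → Matrix (Fin 1) (Fin N) A, (∀ i, y i * p = y i) ∧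
        (∑ i, (y i)ᴴ * x i) = p ∧
          CornerIsUnit p (∑ i : Fin k, (y i.castSucc)ᴴ * y i.castSucc) :=
  warfield_condition_rowSpace_general A N p hp hps k x hx
end

section
/- Let A be a unital C*-algebra, N ≥ 1, p ∈ M_N(A) a projection, and X = A^N·p viewed as a left A-module. Then Bsr(X) ≤ tsr(X): if k ≥ 1 is such that Gen_k(X) is dense in X^k, then every (k+1)-tuple in Gen_{k+1}(X) is reducible. -/
open Matrix

/-- A `k`-tuple of rows in `X = Aᴺ·p` generates `X` as a left `A`-module:
`A·x₁ + ⋯ + A·x_k = X`. -/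
def GenTuple {A : Type*} [Ring A] {N : ℕ} (p : Matrix (Fin N) (Fin N) A) {k : ℕ}
    (x : Fin k → Matrix (Fin 1) (Fin N) A) : Prop :=
  ∀ v : Matrix (Fin 1) (Fin N) A, v * p = v → ∃ a : Fin k → A, ∑ i, a i • x i = v

/-!
Write `M` for the matrix whose rows are `x₁, …, x_k`, `y = x_{k+1}`, and `p = D M + z y` for
coefficient matrices with `p D = D`, `p z = z`. The rows of `Dᴴ` lie in `X`, so by density they
can be approximated by a generating tuple, the rows of some `D'ᴴ`; generation gives `D' E = p`.
Units of the C⋆-algebra `M_N(A)` form an open set, so `1 + (D' - D) M` is invertible for `D'`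
close to `D`. Since `D' (M + E z y) = (1 + (D' - D) M) p`, the rows of `p`, hence all of `X`,
are combinations of the rows of `M + (E z) y`, that is of `x_i + a_i y` with `a = E z`.
-/

section RowStack

variable {A ι n : Type*}

def rowStack (x : ι → Matrix (Fin 1) n A) : Matrix ι n A :=
  Matrix.of fun i => x i 0

theorem continuous_rowStack [TopologicalSpace A] :
    Continuous (rowStack : (ι → Matrix (Fin 1) n A) → Matrix ι n A) :=
  continuous_pi fun i => continuous_pi fun b => (continuous_apply i).matrix_elem 0 b

variable [Ring A]

theorem rowStack_mul [Fintype n] {m : Type*} (x : ι → Matrix (Fin 1) n A) (P : Matrix n m A) :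
    rowStack x * P = rowStack fun i => x i * P := by
  ext i b
  simp [rowStack, mul_apply]

theorem rowStack_add_smul (x : ι → Matrix (Fin 1) n A) (r : Matrix ι (Fin 1) A)
    (y : Matrix (Fin 1) n A) :
    rowStack (fun i => x i + r i 0 • y) = rowStack x + r * y := by
  ext i b
  simp [rowStack, mul_apply]

theorem sum_smul_eq_replicateRow_mul_rowStack [Fintype ι] (a : ι → A)
    (x : ι → Matrix (Fin 1) n A) :
    ∑ i, a i • x i = replicateRow (Fin 1) a * rowStack x := by
  ext u b
  simp [rowStack, mul_apply, Matrix.sum_apply, Subsingleton.elim u 0]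

theorem mul_rowStack_eq_castSucc_add_last {k : ℕ} {m : Type*} (C : Matrix m (Fin (k + 1)) A)
    (x : Fin (k + 1) → Matrix (Fin 1) n A) :
    C * rowStack x = C.submatrix id Fin.castSucc * rowStack (fun i : Fin k => x i.castSucc) +
      C.submatrix id (fun _ : Fin 1 => Fin.last k) * x (Fin.last k) := by
  ext j b
  simp [rowStack, mul_apply, Fin.sum_univ_castSucc]

end RowStack

theorem Matrix.mul_submatrix_id_of_mul_eq {α m n l : Type*} [Fintype m] [Fintype n] [Semiring α]
    {P : Matrix m m α} {C : Matrix m n α} (h : P * C = C) (f : l → n) :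
    P * C.submatrix id f = C.submatrix id f := by
  conv_rhs => rw [← h, submatrix_mul _ _ id id f Function.bijective_id, submatrix_id_id]

section GenTuple

variable {A : Type*} [Ring A] {N k : ℕ} {p : Matrix (Fin N) (Fin N) A}

theorem genTuple_iff (hp : p * p = p) {x : Fin k → Matrix (Fin 1) (Fin N) A} :
    GenTuple p x ↔ ∃ C : Matrix (Fin N) (Fin k) A, C * rowStack x = p := by
  simp only [GenTuple, sum_smul_eq_replicateRow_mul_rowStack]
  constructor
  · intro h
    have hrow : ∀ j, replicateRow (Fin 1) (p j) * p = replicateRow (Fin 1) (p j) := fun j => by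
      rw [← replicateRow_vecMul, ← mul_apply_eq_vecMul, hp]
    choose a ha using fun j => h _ (hrow j)
    refine ⟨Matrix.of a, ?_⟩
    ext j b
    simpa [mul_apply] using congrFun (congrFun (ha j) 0) b
  · rintro ⟨C, hC⟩ v hv
    refine ⟨(v * C) 0, ?_⟩
    have hvC : replicateRow (Fin 1) ((v * C) 0) = v * C := by
      ext u i
      simp [Subsingleton.elim u 0]
    rw [hvC, Matrix.mul_assoc, hC, hv]

theorem GenTuple.exists_coeff (hp : p * p = p) {x : Fin k → Matrix (Fin 1) (Fin N) A}
    (h : GenTuple p x) : ∃ C : Matrix (Fin N) (Fin k) A, p * C = C ∧ C * rowStack x = p := by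
  obtain ⟨C, hC⟩ := (genTuple_iff hp).1 h
  exact ⟨p * C, by rw [← Matrix.mul_assoc, hp], by rw [Matrix.mul_assoc, hC, hp]⟩

end GenTuple

theorem Matrix.exists_mul_add_mul_eq_of_isUnit {R m n o : Type*} [Ring R] [Fintype m]
    [Fintype n] [Fintype o] [DecidableEq n] {p : Matrix n n R} {M : Matrix m n R}
    {y : Matrix o n R} {D D' : Matrix n m R} {z : Matrix n o R} {E : Matrix m n R}
    (hsplit : D * M + z * y = p) (hz : p * z = z) (hE : D' * E = p) (hM : M * p = M)
    (hunit : IsUnit (1 + (D' - D) * M)) :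
    ∃ F : Matrix n m R, F * (M + E * z * y) = p := by
  obtain ⟨w, hw⟩ := hunit.exists_left_inv
  have hD' : D' * (M + E * z * y) = (1 + (D' - D) * M) * p := by
    rw [Matrix.add_mul, Matrix.one_mul, Matrix.mul_assoc _ M, hM, Matrix.sub_mul, ← hsplit,
      Matrix.mul_add, ← Matrix.mul_assoc, ← Matrix.mul_assoc, hE, hz]
    abel
  exact ⟨w * D', by rw [Matrix.mul_assoc, hD', ← Matrix.mul_assoc, hw, Matrix.one_mul]⟩

theorem Matrix.isOpen_setOf_isUnit {A n : Type*} [CStarAlgebra A] [Fintype n] [DecidableEq n] :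
    IsOpen {M : Matrix n n A | IsUnit M} := by
  -- the C⋆-norm of `CStarMatrix` needs an order on `A`; its topology is the product topology
  let := CStarAlgebra.spectralOrder A
  have := CStarAlgebra.spectralOrderedRing A
  exact Units.isOpen.preimage (f := CStarMatrix.ofMatrixRingEquiv (n := n) (A := A)) continuous_id

theorem exists_genTuple_isUnit_one_add {A : Type*} [CStarAlgebra A] {N k : ℕ}
    {p : Matrix (Fin N) (Fin N) A} (hps : pᴴ = p)
    (hdense : Dense {x : Fin k → {v : Matrix (Fin 1) (Fin N) A // v * p = v} |
      GenTuple p fun i => (x i : Matrix (Fin 1) (Fin N) A)})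
    {D : Matrix (Fin N) (Fin k) A} (hD : p * D = D) (M : Matrix (Fin k) (Fin N) A) :
    ∃ s : Fin k → Matrix (Fin 1) (Fin N) A,
      GenTuple p s ∧ IsUnit (1 + ((rowStack s)ᴴ - D) * M) := by
  let f : (Fin k → {v : Matrix (Fin 1) (Fin N) A // v * p = v}) → Matrix (Fin N) (Fin N) A :=
    fun s => 1 + ((rowStack fun i => (s i).1)ᴴ - D) * M
  have hf : Continuous f := by
    refine continuous_const.add (Continuous.matrix_mul ?_ continuous_const)
    refine Continuous.sub (Continuous.matrix_conjTranspose ?_) continuous_const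
    exact continuous_rowStack.comp (continuous_pi fun i => (continuous_apply i).subtype_val)
  have hT : ∀ i, replicateRow (Fin 1) (Dᴴ i) * p = replicateRow (Fin 1) (Dᴴ i) := fun i => by
    rw [← replicateRow_vecMul, ← mul_apply_eq_vecMul, ← hps, ← conjTranspose_mul, hD]
  let T : Fin k → {v : Matrix (Fin 1) (Fin N) A // v * p = v} := fun i => ⟨_, hT i⟩
  have hfT : f T = 1 := by
    have hrows : (rowStack fun i => (T i).1) = Dᴴ := rfl
    simp [f, hrows]
  obtain ⟨s, hs, hsU⟩ := hdense.exists_mem_open (isOpen_setOf_isUnit.preimage hf)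
    ⟨T, by simp [hfT]⟩
  exact ⟨fun i => (s i).1, hs, hsU⟩

theorem bsr_le_tsr_rowSpace_general (A : Type*) [CStarAlgebra A]
    (N : ℕ)
    (p : Matrix (Fin N) (Fin N) A) (hp : p * p = p) (hps : pᴴ = p)
    (k : ℕ)
    (hdense : Dense {x : Fin k → {v : Matrix (Fin 1) (Fin N) A // v * p = v} |
      GenTuple p fun i => (x i : Matrix (Fin 1) (Fin N) A)})
    (x : Fin (k + 1) → Matrix (Fin 1) (Fin N) A) (hx : ∀ i, x i * p = x i)
    (hgen : GenTuple p x) :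
    ∃ a : Fin k → A, GenTuple p fun i => x i.castSucc + a i • x (Fin.last k) := by
  obtain ⟨C, hpC, hC⟩ := hgen.exists_coeff hp
  set M := rowStack fun i : Fin k => x i.castSucc
  set z := C.submatrix id fun _ : Fin 1 => Fin.last k
  have hsplit : C.submatrix id Fin.castSucc * M + z * x (Fin.last k) = p := by
    rw [← mul_rowStack_eq_castSucc_add_last, hC]
  have hM : M * p = M := by simp only [M, rowStack_mul, hx]
  obtain ⟨s, hs, hunit⟩ :=
    exists_genTuple_isUnit_one_add hps hdense (mul_submatrix_id_of_mul_eq hpC _) M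
  obtain ⟨E, hE⟩ := (genTuple_iff hp).1 hs
  have hsE : (rowStack s)ᴴ * Eᴴ = p := by rw [← conjTranspose_mul, hE, hps]
  obtain ⟨F, hF⟩ := exists_mul_add_mul_eq_of_isUnit hsplit (mul_submatrix_id_of_mul_eq hpC _)
    hsE hM hunit
  exact ⟨fun i => (Eᴴ * z) i 0, (genTuple_iff hp).2 ⟨F, by rwa [rowStack_add_smul]⟩⟩

/-- `Bsr(X) ≤ tsr(X)`.  Let `A` be a unital C⋆-algebra, `p ∈ M_N(A)` a
projection, and `X = Aᴺ·p` viewed as a left `A`-module.  If `k ≥ 1` is such that `Gen_k(X)`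
is dense in `Xᵏ`, then every `(k+1)`-tuple in `Gen_{k+1}(X)` is reducible. -/
theorem bsr_le_tsr_rowSpace (A : Type*) [CStarAlgebra A]
    (N : ℕ) (hN : 1 ≤ N)
    (p : Matrix (Fin N) (Fin N) A) (hp : p * p = p) (hps : pᴴ = p)
    (k : ℕ) (hk : 1 ≤ k)
    (hdense : Dense {x : Fin k → {v : Matrix (Fin 1) (Fin N) A // v * p = v} |
      GenTuple p fun i => (x i : Matrix (Fin 1) (Fin N) A)})
    (x : Fin (k + 1) → Matrix (Fin 1) (Fin N) A) (hx : ∀ i, x i * p = x i)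
    (hgen : GenTuple p x) :
    ∃ a : Fin k → A, GenTuple p fun i => x i.castSucc + a i • x (Fin.last k) :=
  bsr_le_tsr_rowSpace_general A N p hp hps k hdense x hx hgen
end

section
/- Let A be a unital C*-algebra, viewed as a left module over itself. Then Bsr(A) = tsr(A): the least n ≥ 1 such that for every left-unimodular (n+1)-tuple (x_1,…,x_n,y) (i.e., A·x_1 + ⋯ + A·x_n + A·y = A) there exist a_1,…,a_n ∈ A with A·(x_1 + a_1 y) + ⋯ + A·(x_n + a_n y) = A, equals the least n ≥ 1 such that the set of left-unimodular n-tuples {(x_1,…,x_n) ∈ Aⁿ : A·x_1 + ⋯ + A·x_n = A} is dense in Aⁿ (both taken in ℕ ∪ {∞}). -/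
open Finset Filter Topology

/-!
Density implies the stable range condition in any Banach algebra: if `∑ bᵢ xᵢ + c y = 1`, pick a
unimodular `z` so close to `x` that `w = ∑ bᵢ zᵢ + c y` is still invertible; then
`x + (z - x) w⁻¹ c y = z - (z - x) w⁻¹ ∑ bᵢ zᵢ` is obtained from `z` by an invertible elementary
transformation.

Conversely, in a C⋆-algebra let `H = ∑ xᵢ⋆ xᵢ` and `y = e(H)` with `e = tent δ` a bump at `0`, so that
`H + y²` is invertible and `(x, y)` is unimodular. Reduce it to a unimodular `x + a y` and multiply
on the right by the invertible `u = f(H)`, where `f = ramp δ δ'` equals a tiny `δ'` on `[0, δ]`, the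
support of `e`, and `1` on `[2δ, ∞)`: `y u` is of norm `≤ δ'`, and `x (u - 1)` is small because
`‖xᵢ (u - 1)‖² ≤ ‖(u - 1) H (u - 1)‖ ≤ sup_{t ≥ 0} t (f t - 1)²`.
-/

section Semiring

variable {ι A : Type*} [Fintype ι] [Semiring A]

def IsLeftUnimodular (x : ι → A) : Prop := ∃ b : ι → A, ∑ i, b i * x i = 1

variable (ι A) in
def BassStableRangeCondition : Prop :=
  ∀ (x : ι → A) (y : A), (∃ (b : ι → A) (c : A), ∑ i, b i * x i + c * y = 1) →
    ∃ a : ι → A, IsLeftUnimodular fun i => x i + a i * y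

theorem IsLeftUnimodular.mul_right_of_isUnit {x : ι → A} (hx : IsLeftUnimodular x) {u : A}
    (hu : IsUnit u) : IsLeftUnimodular fun i => x i * u := by
  obtain ⟨b, hb⟩ := hx
  obtain ⟨v, hv⟩ := hu.exists_left_inv
  refine ⟨fun i => v * b i, ?_⟩
  calc ∑ i, v * b i * (x i * u) = v * (∑ i, b i * x i) * u := by
        simp only [mul_sum, sum_mul, mul_assoc]
    _ = 1 := by rw [hb, mul_one, hv]

end Semiring

section Ring

variable {ι A : Type*} [Fintype ι] [Ring A]

/-- The row operation `z ↦ (1 - r bᵀ) z`; `1 - r bᵀ` is invertible because `1 - bᵀ r` is. -/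
theorem IsLeftUnimodular.sub_mul_sum {z : ι → A} (hz : IsLeftUnimodular z) {b r : ι → A}
    (hbr : IsUnit (1 - ∑ i, b i * r i)) :
    IsLeftUnimodular fun i => z i - r i * ∑ j, b j * z j := by
  obtain ⟨d, hd⟩ := hz
  obtain ⟨v, hv⟩ := hbr.exists_left_inv
  set S := ∑ j, b j * z j
  set B := ∑ i, b i * r i
  set D := ∑ i, d i * r i
  refine ⟨fun i => d i + D * v * b i, ?_⟩
  calc ∑ i, (d i + D * v * b i) * (z i - r i * S)
      = ∑ i, (d i + D * v * b i) * z i - (∑ i, (d i + D * v * b i) * r i) * S := by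
        simp only [mul_sub, sum_sub_distrib, sum_mul, mul_assoc]
    _ = 1 + D * v * S - (D + D * v * B) * S := by
        simp only [add_mul, sum_add_distrib, mul_assoc, ← mul_sum, hd]
        rfl
    _ = 1 + D * (v * (1 - B) - 1) * S := by noncomm_ring
    _ = 1 := by rw [hv, sub_self, mul_zero, zero_mul, add_zero]

theorem exists_isLeftUnimodular_add_mul {x z b : ι → A} {y c : A}
    (hxy : ∑ i, b i * x i + c * y = 1) (hz : IsLeftUnimodular z)
    (hw : IsUnit (∑ i, b i * z i + c * y)) :
    ∃ a : ι → A, IsLeftUnimodular fun i => x i + a i * y := by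
  obtain ⟨w, hw⟩ := hw
  set r : ι → A := fun i => (z i - x i) * ↑w⁻¹
  have hbr : 1 - ∑ i, b i * r i = ↑w⁻¹ := by
    have : ∑ i, b i * (z i - x i) = w - 1 := by
      rw [hw, ← hxy]; simp only [mul_sub, sum_sub_distrib]; abel
    simp only [r, ← mul_assoc, ← sum_mul]
    rw [this, sub_mul, w.mul_inv, one_mul, sub_sub_cancel]
  refine ⟨fun i => r i * c, ?_⟩
  convert hz.sub_mul_sum (b := b) (r := r) (hbr ▸ w⁻¹.isUnit) using 2 with i
  have hcy : c * y = w - ∑ j, b j * z j := by rw [hw]; abel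
  rw [mul_assoc, hcy, mul_sub, mul_assoc _ _ (w : A), w.inv_mul, mul_one]
  abel

end Ring

theorem bassStableRangeCondition_of_dense {ι A : Type*} [Fintype ι] [NormedRing A]
    [HasSummableGeomSeries A] (hA : Dense {x : ι → A | IsLeftUnimodular x}) :
    BassStableRangeCondition ι A := by
  rintro x y ⟨b, c, hxy⟩
  have hunit : {z : ι → A | IsUnit (∑ i, b i * z i + c * y)} ∈ 𝓝 x := by
    have hcont : Continuous fun z : ι → A => ∑ i, b i * z i + c * y := by fun_prop
    show (fun z : ι → A => ∑ i, b i * z i + c * y) ⁻¹' {w | IsUnit w} ∈ 𝓝 x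
    exact hcont.continuousAt.preimage_mem_nhds (by rw [hxy]; exact Units.nhds 1)
  obtain ⟨z, hzw, hz⟩ := mem_closure_iff_nhds.1 (hA x) _ hunit
  exact exists_isLeftUnimodular_add_mul hxy hz hzw

noncomputable def tent (δ t : ℝ) : ℝ := max (1 - t / δ) 0

noncomputable def ramp (δ δ' t : ℝ) : ℝ := max δ' (min (t / δ - 1) 1)

@[fun_prop]
theorem continuous_tent (δ : ℝ) : Continuous (tent δ) := by unfold tent; fun_prop

@[fun_prop]
theorem continuous_ramp (δ δ' : ℝ) : Continuous (ramp δ δ') := by unfold ramp; fun_prop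

theorem tent_zero (δ : ℝ) : tent δ 0 = 1 := by simp [tent]

theorem ramp_pos {δ δ' : ℝ} (hδ' : 0 < δ') (t : ℝ) : 0 < ramp δ δ' t :=
  hδ'.trans_le (le_max_left _ _)

theorem abs_tent_mul_ramp_le {δ δ' t : ℝ} (hδ : 0 < δ) (hδ' : 0 ≤ δ') (ht : 0 ≤ t) :
    |tent δ t * ramp δ δ' t| ≤ δ' := by
  rcases le_or_gt δ t with hδt | htδ
  · have : tent δ t = 0 := max_eq_right (by rw [sub_nonpos, le_div_iff₀ hδ]; linarith)
    simpa [this]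
  · have h1 : ramp δ δ' t = δ' := by
      have : t / δ < 1 := (div_lt_one hδ).2 htδ
      exact max_eq_left (min_le_of_left_le (by linarith))
    have h2 : 0 ≤ tent δ t := le_max_right _ _
    have h3 : tent δ t ≤ 1 := max_le (by linarith [div_nonneg ht hδ.le]) zero_le_one
    rw [h1, abs_of_nonneg (mul_nonneg h2 hδ')]
    nlinarith

theorem abs_ramp_sub_one_mul_le {δ δ' t : ℝ} (hδ : 0 < δ) (hδ'0 : 0 ≤ δ') (hδ'1 : δ' ≤ 1)
    (ht : 0 ≤ t) : |(ramp δ δ' t - 1) * t * (ramp δ δ' t - 1)| ≤ 2 * δ := by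
  rcases le_or_gt (2 * δ) t with hδt | htδ
  · have : ramp δ δ' t = 1 := by
      have : 1 ≤ t / δ - 1 := by rw [le_sub_iff_add_le, le_div_iff₀ hδ]; linarith
      rw [ramp, min_eq_right this, max_eq_right hδ'1]
    rw [this, sub_self, zero_mul, mul_zero, abs_zero]
    positivity
  · have h0 : 0 ≤ ramp δ δ' t := hδ'0.trans (le_max_left _ _)
    have h1 : ramp δ δ' t ≤ 1 := max_le hδ'1 (min_le_right _ _)
    rw [show (ramp δ δ' t - 1) * t * (ramp δ δ' t - 1) = t * (1 - ramp δ δ' t) ^ 2 by ring,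
      abs_of_nonneg (by positivity)]
    calc t * (1 - ramp δ δ' t) ^ 2 ≤ t :=
          mul_le_of_le_one_right ht (pow_le_one₀ (by linarith) (by linarith))
      _ ≤ 2 * δ := htδ.le

section CStar

variable {A : Type*} [CStarAlgebra A] [PartialOrder A] [StarOrderedRing A]

theorem norm_cfc_le_of_nonneg {H : A} (hH : 0 ≤ H) {f : ℝ → ℝ} {c : ℝ} (hc : 0 ≤ c)
    (hf : ∀ t, 0 ≤ t → |f t| ≤ c) : ‖cfc f H‖ ≤ c :=
  norm_cfc_le hc fun t ht => hf t (spectrum_nonneg_of_nonneg hH ht)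

theorem isUnit_add_cfc_mul_self {H : A} (hH : 0 ≤ H) {e : ℝ → ℝ} (he0 : e 0 ≠ 0)
    (he : ContinuousOn e (spectrum ℝ H) := by cfc_cont_tac) :
    IsUnit (H + cfc e H * cfc e H) := by
  rw [show H + cfc e H * cfc e H = cfc (fun t => t + e t * e t) H by
    rw [cfc_add .., cfc_mul .., cfc_id' ℝ H], isUnit_cfc_iff ..]
  intro t ht
  rcases (spectrum_nonneg_of_nonneg hH ht).eq_or_lt with rfl | ht0
  · simpa using he0
  · exact (add_pos_of_pos_of_nonneg ht0 (mul_self_nonneg _)).ne'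

theorem norm_mul_cfc_sq_le {x H : A} (hx : star x * x ≤ H) (g : ℝ → ℝ)
    (hg : ContinuousOn g (spectrum ℝ H) := by cfc_cont_tac) :
    ‖x * cfc g H‖ ^ 2 ≤ ‖cfc (fun t => g t * t * g t) H‖ := by
  have hH : IsSelfAdjoint H := .of_nonneg ((star_mul_self_nonneg x).trans hx)
  have hg' : star (cfc g H) = cfc g H := (cfc_predicate g H).star_eq
  calc ‖x * cfc g H‖ ^ 2 = ‖star (cfc g H) * (star x * x) * cfc g H‖ := by
        rw [sq, ← CStarRing.norm_star_mul_self, star_mul]; noncomm_ring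
    _ ≤ ‖star (cfc g H) * H * cfc g H‖ :=
        CStarAlgebra.norm_le_norm_of_nonneg_of_le
          (star_left_conjugate_nonneg (star_mul_self_nonneg x) _)
          (star_left_conjugate_le_conjugate hx _)
    _ = ‖cfc (fun t => g t * t * g t) H‖ := by
        rw [hg', cfc_mul .., cfc_mul (fun t => g t) (fun t => t) H, cfc_id' ℝ H]

theorem exists_sum_mul_add_mul_cfc_eq_one {ι : Type*} [Fintype ι] (x : ι → A) {e : ℝ → ℝ}
    (he0 : e 0 ≠ 0) (he : Continuous e) :
    ∃ (b : ι → A) (c : A), ∑ i, b i * x i + c * cfc e (∑ i, star (x i) * x i) = 1 := by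
  set H := ∑ i, star (x i) * x i
  have hH : 0 ≤ H := sum_nonneg fun i _ => star_mul_self_nonneg (x i)
  obtain ⟨v, hv⟩ := (isUnit_add_cfc_mul_self hH he0).exists_left_inv
  refine ⟨fun i => v * star (x i), v * cfc e H, ?_⟩
  rw [← hv, mul_add, mul_sum]
  simp only [mul_assoc]

theorem exists_isUnit_norm_cfc_tent_mul_le {H : A} (hH : 0 ≤ H) {δ δ' : ℝ} (hδ : 0 < δ)
    (hδ'0 : 0 < δ') (hδ'1 : δ' ≤ 1) :
    ∃ u : A, IsUnit u ∧ ‖cfc (tent δ) H * u‖ ≤ δ' ∧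
      ∀ x : A, star x * x ≤ H → ‖x * (u - 1)‖ ^ 2 ≤ 2 * δ := by
  refine ⟨cfc (ramp δ δ') H, (isUnit_cfc_iff _ _).2 fun t _ => (ramp_pos hδ'0 t).ne', ?_,
    fun x hx => ?_⟩
  · rw [← cfc_mul ..]
    exact norm_cfc_le_of_nonneg hH hδ'0.le fun t ht => abs_tent_mul_ramp_le hδ hδ'0.le ht
  · calc ‖x * (cfc (ramp δ δ') H - 1)‖ ^ 2
        = ‖x * cfc (fun t => ramp δ δ' t - 1) H‖ ^ 2 := by rw [cfc_sub .., cfc_const_one ..]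
      _ ≤ ‖cfc (fun t => (ramp δ δ' t - 1) * t * (ramp δ δ' t - 1)) H‖ := norm_mul_cfc_sq_le hx _
      _ ≤ 2 * δ := norm_cfc_le_of_nonneg hH (by positivity) fun t ht =>
          abs_ramp_sub_one_mul_le hδ hδ'0.le hδ'1 ht

end CStar

theorem dense_of_bassStableRangeCondition {ι A : Type*} [Fintype ι] [CStarAlgebra A]
    (hA : BassStableRangeCondition ι A) : Dense {x : ι → A | IsLeftUnimodular x} := by
  let := CStarAlgebra.spectralOrder A
  have := CStarAlgebra.spectralOrderedRing A
  refine Metric.dense_iff.2 fun x ε hε => ?_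
  set H := ∑ i, star (x i) * x i
  have hH : 0 ≤ H := sum_nonneg fun i _ => star_mul_self_nonneg (x i)
  have hxH : ∀ i, star (x i) * x i ≤ H := fun i =>
    single_le_sum (fun j _ => star_mul_self_nonneg (x j)) (mem_univ i)
  set δ : ℝ := (ε / 2) ^ 2 / 2
  have hδ : 0 < δ := by positivity
  set y := cfc (tent δ) H
  obtain ⟨a, ha⟩ := hA x y <|
    exists_sum_mul_add_mul_cfc_eq_one x (tent_zero δ ▸ one_ne_zero) (continuous_tent δ)
  obtain ⟨δ', ⟨hδ'a, hδ'1⟩, hδ'0⟩ : ∃ δ' : ℝ, ((∀ i, ‖a i‖ * δ' < ε / 2) ∧ δ' ≤ 1) ∧ 0 < δ' := by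
    refine ((eventually_all.2 fun i => ?_).and (eventually_le_nhds one_pos)
      |>.filter_mono nhdsWithin_le_nhds |>.and self_mem_nhdsWithin).exists (f := 𝓝[>] 0)
    exact (continuous_const.mul continuous_id).tendsto' 0 0 (mul_zero _)
      |>.eventually (gt_mem_nhds (half_pos hε))
  obtain ⟨u, hu, hyu, hxu⟩ := exists_isUnit_norm_cfc_tent_mul_le hH hδ hδ'0 hδ'1
  have hxu' : ∀ i, ‖x i * (u - 1)‖ ≤ ε / 2 := fun i =>
    (pow_le_pow_iff_left₀ (norm_nonneg _) (half_pos hε).le two_ne_zero).1 <|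
      (hxu _ (hxH i)).trans_eq (by ring)
  refine ⟨fun i => (x i + a i * y) * u, ?_, ha.mul_right_of_isUnit hu⟩
  rw [Metric.mem_ball, dist_pi_lt_iff hε]
  intro i
  calc dist ((x i + a i * y) * u) (x i) = ‖x i * (u - 1) + a i * (y * u)‖ := by
        rw [dist_eq_norm]; noncomm_ring
    _ ≤ ‖x i * (u - 1)‖ + ‖a i‖ * ‖y * u‖ :=
        (norm_add_le _ _).trans (add_le_add le_rfl (norm_mul_le _ _))
    _ < ε / 2 + ε / 2 := add_lt_add_of_le_of_lt (hxu' i)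
        ((mul_le_mul_of_nonneg_left hyu (norm_nonneg _)).trans_lt (hδ'a i))
    _ = ε := add_halves ε

theorem bassStableRangeCondition_iff_dense {ι A : Type*} [Fintype ι] [CStarAlgebra A] :
    BassStableRangeCondition ι A ↔ Dense {x : ι → A | IsLeftUnimodular x} :=
  ⟨dense_of_bassStableRangeCondition, bassStableRangeCondition_of_dense⟩

/-- Herman–Vaserstein: `Bsr(A) = tsr(A)`.  Let `A` be a unital
C⋆-algebra, viewed as a left module over itself.  The least `n ≥ 1` such that every
left-unimodular `(n+1)`-tuple `(x₁, …, xₙ, y)` can be reduced (there are `a₁, …, aₙ ∈ A`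
with `(x₁ + a₁ y, …, xₙ + aₙ y)` left-unimodular) equals the least `n ≥ 1` such that the
set of left-unimodular `n`-tuples is dense in `Aⁿ`, both taken in `ℕ ∪ {∞}`. -/
theorem bsr_eq_tsr_cstarAlgebra (A : Type*) [CStarAlgebra A] :
    sInf ((fun n : ℕ => (n : ℕ∞)) '' {n : ℕ | 1 ≤ n ∧
        ∀ (x : Fin n → A) (y : A),
          (∃ (b : Fin n → A) (c : A), ∑ i, b i * x i + c * y = 1) →
            ∃ a : Fin n → A, ∃ b : Fin n → A, ∑ i, b i * (x i + a i * y) = 1}) =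
      sInf ((fun n : ℕ => (n : ℕ∞)) '' {n : ℕ | 1 ≤ n ∧
        Dense {x : Fin n → A | ∃ b : Fin n → A, ∑ i, b i * x i = 1}}) := by
  congr 2
  ext n
  exact and_congr_right fun _ => bassStableRangeCondition_iff_dense
end
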